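/- There exist α ∈ Z_p ∖ {0, 1, …, Δ+1}, a tuple (β_{e_1}, …, β_{e_m}) with each β_{e_i} ∈ {1, 2, …, Δ+1, α} and C^{P'}(β_{e_1}, …, β_{e_m}) ≠ 0 in Z_p, and a tuple (β_{v_1}, …, β_{v_n}) with each β_{v_i} ∈ {1, 2, …, Δ+1} such that P(β_{v_1}, …, β_{v_n}, β_{e_1}, …, β_{e_m}) ≠ 0 in Z_p. -/

import Mathlib

open MvPolynomial
open scoped Classical

noncomputable section

/-- Exponent reduction implementing Fermat's relation `x^p ≡ x`:
`0 ↦ 0` and `k ↦ ((k-1) mod (p-1)) + 1` for `k ≥ 1`. -/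
def fermatExp (p k : ℕ) : ℕ := if k = 0 then 0 else (k - 1) % (p - 1) + 1

lemma fermatExp_zero (p : ℕ) : fermatExp p 0 = 0 := by simp [fermatExp]

/-- The Fermat reduction `F'` of a multivariate polynomial over `Z_p`: every exponent is
reduced using `x^p ≡ x`, so that the result has degree `≤ p-1` in each variable. -/
def fermatReduce {σ : Type*} (p : ℕ) (F : MvPolynomial σ (ZMod p)) : MvPolynomial σ (ZMod p) :=
  F.support.sum fun d => monomial (d.mapRange (fermatExp p) (fermatExp_zero p)) (F.coeff d)

/-- Univariate Fermat reduction. -/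
def fermatReduceUni (p : ℕ) (f : Polynomial (ZMod p)) : Polynomial (ZMod p) :=
  f.support.sum fun k => Polynomial.monomial (fermatExp p k) (f.coeff k)

/-- `N_e(v_i)`: the edges incident to the vertex `i`. -/
def incidentE {n m : ℕ} (ed : Fin m → Sym2 (Fin n)) (i : Fin n) : Finset (Fin m) :=
  Finset.univ.filter fun k => i ∈ ed k

/-- `N_i(v_i)`: the neighbours of `v_i` other than `v_1, …, v_{i-1}`. -/
def laterNbrs {n m : ℕ} (ed : Fin m → Sym2 (Fin n)) (i : Fin n) : Finset (Fin n) :=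
  Finset.univ.filter fun j => (∃ k, ed k = s(i, j)) ∧ ¬ j < i

/-- `N_i(e_i)`: the edges sharing an endpoint with `e_i`, other than `e_1, …, e_{i-1}`. -/
def laterAdjE {n m : ℕ} (ed : Fin m → Sym2 (Fin n)) (k : Fin m) : Finset (Fin m) :=
  Finset.univ.filter fun l => (l ≠ k ∧ ∃ x, x ∈ ed k ∧ x ∈ ed l) ∧ ¬ l < k

/-- The polynomial `P` (vertex variables are `Sum.inl`, edge variables are `Sum.inr`). -/
def Ppoly (n m Δ p : ℕ) (ed : Fin m → Sym2 (Fin n)) : MvPolynomial (Fin n ⊕ Fin m) (ZMod p) :=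
  ∏ i : Fin n,
    ((∏ j ∈ laterNbrs ed i, (X (Sum.inl i) - X (Sum.inl j))) *
      (∏ k ∈ incidentE ed i, (X (Sum.inl i) - X (Sum.inr k))) *
      (∏ l ∈ Finset.Icc (Δ + 2) p, (X (Sum.inl i) - C (l : ZMod p))))

/-- The coefficient of the vertex-monomial `∏ v_j ^ (d j)` of `F`, as a polynomial in the
edge variables. -/
def vCoeff {n m p : ℕ} (F : MvPolynomial (Fin n ⊕ Fin m) (ZMod p)) (d : Fin n →₀ ℕ) :
    MvPolynomial (Fin m) (ZMod p) :=
  ((sumAlgEquiv (ZMod p) (Fin n) (Fin m)) F).coeff d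

/-- The colour set `K = {1, …, Δ+1} ∪ {α} ⊆ Z_p`. -/
def colorSet (Δ p : ℕ) (α : ZMod p) : Finset (ZMod p) :=
  insert α ((Finset.Icc 1 (Δ + 1)).image fun l : ℕ => (l : ZMod p))

/-- The polynomial `E^k`. -/
def Epoly {n m : ℕ} (Δ p : ℕ) [NeZero p] (ed : Fin m → Sym2 (Fin n)) (α : ZMod p) (k : Fin m) :
    MvPolynomial (Fin m) (ZMod p) :=
  (∏ l ∈ laterAdjE ed k, (X k - X l)) *
    (∏ c ∈ Finset.univ \ colorSet Δ p α, (X k - C c))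

/-- `Q_i = C^{P'} · E^1 ⋯ E^i`; here `i` is the number of edge factors, so `Qpoly … i`
is the paper's `Q_i` (and `Qpoly … 0 = C^{P'}`). -/
def Qpoly {n m : ℕ} (Δ p : ℕ) [NeZero p] (ed : Fin m → Sym2 (Fin n)) (α : ZMod p)
    (CP : MvPolynomial (Fin m) (ZMod p)) (i : ℕ) : MvPolynomial (Fin m) (ZMod p) :=
  CP * ∏ k ∈ Finset.univ.filter (fun k : Fin m => (k : ℕ) < i), Epoly Δ p ed α k

/-- Fermat reduction in all variables except the variable `j`. -/
def fermatReduceExcept {m : ℕ} (p : ℕ) (j : Fin m) (F : MvPolynomial (Fin m) (ZMod p)) :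
    MvPolynomial (Fin m) (ZMod p) :=
  F.support.sum fun d =>
    monomial (Finsupp.filter (fun k => k = j) d +
      Finsupp.mapRange (fermatExp p) (fermatExp_zero p) (Finsupp.filter (fun k => k ≠ j) d))
      (F.coeff d)

/-- Given an exponent vector `d0` for the variables other than `j`, the coefficient in `F` of the
monomial `∏_{k ≠ j} X_k ^ (d0 k)`, as a univariate polynomial in the variable `j`. -/
def coeffAt {m p : ℕ} (j : Fin m) (d0 : Fin m →₀ ℕ) (F : MvPolynomial (Fin m) (ZMod p)) :
    Polynomial (ZMod p) :=
  (F.support.filter fun d => ∀ k, k ≠ j → d k = d0 k).sum fun d =>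
    Polynomial.monomial (d j) (F.coeff d)


/-! Every non-zero polynomial over `Z_p` takes a non-zero value on every grid `∏ Sᵢ` with
`deg_{xᵢ} < |Sᵢ|` (Alon). Take `α = Δ+2`. The variable `e_k` occurs in `P` only in the two factors
`v_i - e_k` at the endpoints of `e_k`, so `C^{P'}` has degree `≤ 2 < |{1, …, Δ+1, α}|` in each
edge variable, which gives `β_e`. Substituting `β_e` into `P'` leaves a polynomial in the vertex
variables whose `d`-th coefficient is `C^{P'}(β_e) ≠ 0` and whose degrees are `< p`, so it does not
vanish on `Z_pⁿ`; since `P` and `P'` agree as functions, this gives `β_v` with `P(β_v, β_e) ≠ 0`.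
The factors `v_i - l`, `Δ+2 ≤ l ≤ p`, of `P` then force `β_v i ∈ {1, …, Δ+1}`. -/

open scoped Finset

namespace MvPolynomial

theorem exists_eval_ne_zero_of_degreeOf_lt_card {σ R : Type*} [Finite σ] [CommRing R] [IsDomain R]
    {F : MvPolynomial σ R} (hF : F ≠ 0) (S : σ → Finset R) (hdeg : ∀ i, F.degreeOf i < #(S i)) :
    ∃ x : σ → R, (∀ i, x i ∈ S i) ∧ eval x F ≠ 0 := by
  by_contra! h
  exact hF (eq_zero_of_eval_zero_at_prod_finset F S hdeg h)

section Degrees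

variable {σ R : Type*}

theorem degreeOf_monomial_le [CommSemiring R] (s : σ →₀ ℕ) (a : R) (j : σ) :
    degreeOf j (monomial s a) ≤ s j := by
  by_cases ha : a = 0
  · simp [ha]
  · rw [degreeOf_monomial_eq s j ha]

theorem degreeOf_map_le {S : Type*} [CommSemiring R] [CommSemiring S] (f : R →+* S)
    (F : MvPolynomial σ R) (j : σ) :
    degreeOf j (map f F) ≤ degreeOf j F :=
  degreeOf_le_iff.mpr fun _ hu => monomial_le_degreeOf j (support_map_subset f F hu)

theorem degreeOf_X_sub_le [CommRing R] {i j : σ} (h : j ≠ i) (q : MvPolynomial σ R) :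
    degreeOf j (X i - q) ≤ degreeOf j q :=
  (degreeOf_sub_le _ _ _).trans (max_le (by rw [degreeOf_X_of_ne h]; exact Nat.zero_le _) le_rfl)

end Degrees

section SumAlgEquiv

variable {R S₁ S₂ : Type*} [CommSemiring R]

theorem sumAlgEquiv_monomial_sumElim (a : S₁ →₀ ℕ) (b : S₂ →₀ ℕ) (c : R) :
    sumAlgEquiv R S₁ S₂ (monomial (a.sumElim b) c) = monomial a (monomial b c) := by
  simp [sumAlgEquiv, monomial, AddMonoidAlgebra.curryAlgEquiv_single]

theorem coeff_coeff_sumAlgEquiv (F : MvPolynomial (S₁ ⊕ S₂) R) (d : S₁ →₀ ℕ) (e : S₂ →₀ ℕ) :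
    ((sumAlgEquiv R S₁ S₂ F).coeff d).coeff e = F.coeff (d.sumElim e) := by
  classical
  induction F using MvPolynomial.induction_on' with
  | monomial u c =>
    obtain ⟨⟨a, b⟩, rfl⟩ := Finsupp.sumFinsuppAddEquivProdFinsupp.symm.surjective u
    have hinj := Finsupp.sumFinsuppAddEquivProdFinsupp.symm.injective.eq_iff
      (a := (a, b)) (b := (d, e))
    simp only [Finsupp.sumFinsuppAddEquivProdFinsupp_symm_apply, Prod.mk.injEq] at hinj ⊢
    simp only [sumAlgEquiv_monomial_sumElim, coeff_monomial, hinj, ite_and]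
    split_ifs <;> simp_all
  | add F G hF hG => simp [hF, hG]

theorem degreeOf_coeff_sumAlgEquiv_le (F : MvPolynomial (S₁ ⊕ S₂) R) (d : S₁ →₀ ℕ) (k : S₂) :
    degreeOf k ((sumAlgEquiv R S₁ S₂ F).coeff d) ≤ degreeOf (Sum.inr k) F :=
  degreeOf_le_iff.mpr fun e he => by
    rw [mem_support_iff, coeff_coeff_sumAlgEquiv, ← mem_support_iff] at he
    simpa using monomial_le_degreeOf (Sum.inr k) he

theorem degreeOf_sumAlgEquiv_le (F : MvPolynomial (S₁ ⊕ S₂) R) (i : S₁) :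
    degreeOf i (sumAlgEquiv R S₁ S₂ F) ≤ degreeOf (Sum.inl i) F :=
  degreeOf_le_iff.mpr fun d hd => by
    obtain ⟨e, he⟩ := ne_zero_iff.mp (mem_support_iff.mp hd)
    rw [coeff_coeff_sumAlgEquiv, ← mem_support_iff] at he
    simpa using monomial_le_degreeOf (Sum.inl i) he

theorem eval_map_eval_sumAlgEquiv (βv : S₁ → R) (βe : S₂ → R) (F : MvPolynomial (S₁ ⊕ S₂) R) :
    eval βv (map (eval βe) (sumAlgEquiv R S₁ S₂ F)) = eval (Sum.elim βv βe) F := by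
  have h : ((eval βv).comp ((map (eval βe)).comp (sumAlgEquiv R S₁ S₂).toRingHom)) =
      eval (Sum.elim βv βe) := by
    refine ringHom_ext (fun a => by simp) ?_
    rintro (i | k) <;> simp
  exact DFunLike.congr_fun h F

end SumAlgEquiv

end MvPolynomial

open MvPolynomial

theorem ZMod.natCast_injOn_Iio (p : ℕ) : Set.InjOn (Nat.cast : ℕ → ZMod p) (Set.Iio p) :=
  fun a ha b hb h => by
    simpa [ZMod.val_cast_of_lt ha, ZMod.val_cast_of_lt hb] using congrArg ZMod.val h

theorem ZMod.natCast_mem_image_natCast_iff {p a : ℕ} {s : Finset ℕ} (hs : ∀ x ∈ s, x < p)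
    (ha : a < p) : (a : ZMod p) ∈ s.image (Nat.cast : ℕ → ZMod p) ↔ a ∈ s := by
  refine ⟨fun h => ?_, fun h => Finset.mem_image_of_mem _ h⟩
  obtain ⟨b, hb, hba⟩ := Finset.mem_image.mp h
  rwa [← ZMod.natCast_injOn_Iio p (hs b hb) ha hba]

section Fermat

variable {p : ℕ}

theorem fermatExp_le (k : ℕ) : fermatExp p k ≤ k := by
  unfold fermatExp
  split_ifs
  · omega
  · have := Nat.mod_le (k - 1) (p - 1)
    omega

theorem fermatExp_lt (hp : 1 < p) (k : ℕ) : fermatExp p k < p := by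
  unfold fermatExp
  split_ifs
  · omega
  · have := Nat.mod_lt (k - 1) (show 0 < p - 1 by omega)
    omega

theorem pow_fermatExp [Fact p.Prime] (a : ZMod p) (k : ℕ) : a ^ fermatExp p k = a ^ k := by
  unfold fermatExp
  split_ifs with hk
  · rw [hk]
  obtain rfl | ha := eq_or_ne a 0
  · rw [zero_pow (by omega), zero_pow hk]
  obtain ⟨t, rfl⟩ : ∃ t, k = t + 1 := ⟨k - 1, by omega⟩
  rw [Nat.add_sub_cancel, pow_succ, pow_succ,
    ← pow_eq_pow_mod t (ZMod.pow_card_sub_one_eq_one ha)]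

theorem eval_fermatReduce {σ : Type*} [Fact p.Prime] (x : σ → ZMod p)
    (F : MvPolynomial σ (ZMod p)) : eval x (fermatReduce p F) = eval x F := by
  conv_rhs => rw [F.as_sum]
  rw [fermatReduce, map_sum, map_sum]
  refine Finset.sum_congr rfl fun u _ => ?_
  rw [eval_monomial, eval_monomial, Finsupp.prod_mapRange_index fun _ => pow_zero _]
  exact congrArg _ (Finsupp.prod_congr fun j _ => pow_fermatExp (x j) (u j))

theorem degreeOf_fermatReduce_le_of_forall {σ : Type*} (F : MvPolynomial σ (ZMod p)) (j : σ)
    {b : ℕ} (hb : ∀ u ∈ F.support, fermatExp p (u j) ≤ b) : degreeOf j (fermatReduce p F) ≤ b :=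
  (degreeOf_sum_le _ _ _).trans <| Finset.sup_le fun u hu =>
    (degreeOf_monomial_le _ _ _).trans (hb u hu)

theorem degreeOf_fermatReduce_le {σ : Type*} (F : MvPolynomial σ (ZMod p)) (j : σ) :
    degreeOf j (fermatReduce p F) ≤ degreeOf j F :=
  degreeOf_fermatReduce_le_of_forall F j fun _ hu =>
    (fermatExp_le _).trans (monomial_le_degreeOf j hu)

theorem degreeOf_fermatReduce_lt {σ : Type*} (hp : 1 < p) (F : MvPolynomial σ (ZMod p)) (j : σ) :
    degreeOf j (fermatReduce p F) < p :=
  Nat.lt_of_le_pred (by omega) <| degreeOf_fermatReduce_le_of_forall F j fun _ _ =>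
    Nat.le_pred_of_lt (fermatExp_lt hp _)

end Fermat

section Graph

variable {n m : ℕ} (ed : Fin m → Sym2 (Fin n))

theorem one_le_of_card_incidentE_le {Δ : ℕ} (k : Fin m) (hΔ : ∀ i, #(incidentE ed i) ≤ Δ) :
    1 ≤ Δ := by
  have hk : k ∈ incidentE ed (ed k).out.1 := by simp [incidentE, Sym2.out_fst_mem]
  exact (Finset.card_pos.mpr ⟨k, hk⟩).trans_le (hΔ _)

theorem card_filter_mem_sym2_le_two {α : Type*} [Fintype α] [DecidableEq α] (z : Sym2 α) :
    #{x | x ∈ z} ≤ 2 := by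
  have : ({x | x ∈ z} : Finset α) = z.toFinset := by ext; simp
  rw [this, Sym2.card_toFinset]
  split_ifs <;> omega

variable (Δ p : ℕ)

theorem degreeOf_inr_Ppoly_le (k : Fin m) :
    degreeOf (Sum.inr k) (Ppoly n m Δ p ed) ≤ #{i | i ∈ ed k} := by
  have hfactor : ∀ i : Fin n, degreeOf (Sum.inr k)
      ((∏ j ∈ laterNbrs ed i, (X (Sum.inl i) - X (Sum.inl j))) *
        (∏ k' ∈ incidentE ed i, (X (Sum.inl i) - X (Sum.inr k'))) *
        (∏ l ∈ Finset.Icc (Δ + 2) p, (X (Sum.inl i) - C (l : ZMod p)))) ≤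
      if i ∈ ed k then 1 else 0 := by
    intro i
    have hvert : ∀ j ∈ laterNbrs ed i,
        degreeOf (Sum.inr k) (X (Sum.inl i) - X (Sum.inl j) : MvPolynomial _ (ZMod p)) = 0 :=
      fun j _ => Nat.le_zero.mp <| (degreeOf_X_sub_le Sum.inr_ne_inl _).trans
        (degreeOf_X_of_ne Sum.inr_ne_inl).le
    have hedge : ∀ k' ∈ incidentE ed i,
        degreeOf (Sum.inr k) (X (Sum.inl i) - X (Sum.inr k') : MvPolynomial _ (ZMod p)) ≤
          if k = k' then 1 else 0 :=
      fun k' _ => (degreeOf_X_sub_le Sum.inr_ne_inl _).trans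
        ((degreeOf_monomial_le _ _ _).trans (by simp [Finsupp.single_apply, eq_comm]))
    have hconst : ∀ l ∈ Finset.Icc (Δ + 2) p,
        degreeOf (Sum.inr k) (X (Sum.inl i) - C (l : ZMod p)) = 0 :=
      fun l _ => Nat.le_zero.mp <| (degreeOf_X_sub_le Sum.inr_ne_inl _).trans (degreeOf_C _ _).le
    calc _ ≤ _ := (degreeOf_mul_le _ _ _).trans (add_le_add_left (degreeOf_mul_le _ _ _) _)
      _ ≤ 0 + (if k ∈ incidentE ed i then 1 else 0) + 0 := by
        gcongr
        · exact (degreeOf_prod_le _ _ _).trans (Finset.sum_eq_zero hvert).le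
        · exact (degreeOf_prod_le _ _ _).trans
            ((Finset.sum_le_sum hedge).trans (by rw [Finset.sum_ite_eq]))
        · exact (degreeOf_prod_le _ _ _).trans (Finset.sum_eq_zero hconst).le
      _ = if i ∈ ed k then 1 else 0 := by simp [incidentE]
  calc _ ≤ ∑ i, if i ∈ ed k then 1 else 0 :=
        (degreeOf_prod_le _ _ _).trans (Finset.sum_le_sum fun i _ => hfactor i)
    _ = #{i | i ∈ ed k} := by rw [Finset.card_filter]

theorem degreeOf_vCoeff_fermatReduce_Ppoly_le_two (d : Fin n →₀ ℕ) (k : Fin m) :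
    degreeOf k (vCoeff (fermatReduce p (Ppoly n m Δ p ed)) d) ≤ 2 :=
  calc _ ≤ degreeOf (Sum.inr k) (fermatReduce p (Ppoly n m Δ p ed)) :=
        degreeOf_coeff_sumAlgEquiv_le _ _ _
    _ ≤ degreeOf (Sum.inr k) (Ppoly n m Δ p ed) := degreeOf_fermatReduce_le _ _
    _ ≤ #{i | i ∈ ed k} := degreeOf_inr_Ppoly_le ed Δ p k
    _ ≤ 2 := card_filter_mem_sym2_le_two _

theorem eval_Ppoly_eq_zero {βv : Fin n → ZMod p} (βe : Fin m → ZMod p) {i : Fin n} {l : ℕ}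
    (hl : l ∈ Finset.Icc (Δ + 2) p) (hβv : βv i = l) :
    eval (Sum.elim βv βe) (Ppoly n m Δ p ed) = 0 := by
  rw [Ppoly, map_prod]
  refine Finset.prod_eq_zero (Finset.mem_univ i) ?_
  rw [map_mul, map_prod]
  refine mul_eq_zero_of_right _ (Finset.prod_eq_zero hl ?_)
  simp [hβv]

theorem mem_image_Icc_of_eval_Ppoly_ne_zero [NeZero p] (hΔp : Δ + 2 ≤ p) {βv : Fin n → ZMod p}
    {βe : Fin m → ZMod p} (h : eval (Sum.elim βv βe) (Ppoly n m Δ p ed) ≠ 0) (i : Fin n) :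
    βv i ∈ (Finset.Icc 1 (Δ + 1)).image fun l : ℕ => (l : ZMod p) := by
  have hval : ((βv i).val : ZMod p) = βv i := ZMod.natCast_zmod_val _
  have hlt : (βv i).val < p := ZMod.val_lt _
  have hpos : (βv i).val ≠ 0 := fun h0 => h <| eval_Ppoly_eq_zero ed Δ p βe
    (Finset.mem_Icc.mpr ⟨hΔp, le_rfl⟩) (by rw [ZMod.natCast_self, ← hval, h0, Nat.cast_zero])
  have hle : (βv i).val ≤ Δ + 1 := by
    by_contra! hgt
    exact h <| eval_Ppoly_eq_zero ed Δ p βe (Finset.mem_Icc.mpr ⟨hgt, hlt.le⟩) hval.symm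
  exact Finset.mem_image.mpr ⟨_, Finset.mem_Icc.mpr ⟨Nat.one_le_iff_ne_zero.mpr hpos, hle⟩, hval⟩

end Graph

theorem card_colorSet {Δ p : ℕ} (hΔp : Δ + 2 < p) :
    #(colorSet Δ p ((Δ + 2 : ℕ) : ZMod p)) = Δ + 2 := by
  have hIcc : ∀ x ∈ Finset.Icc 1 (Δ + 1), x < p := fun x hx => by
    rw [Finset.mem_Icc] at hx
    omega
  rw [colorSet, Finset.card_insert_of_notMem, Finset.card_image_of_injOn, Nat.card_Icc]
  · omega
  · exact (ZMod.natCast_injOn_Iio p).mono fun x hx => hIcc x hx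
  · rw [ZMod.natCast_mem_image_natCast_iff hIcc hΔp, Finset.mem_Icc]
    omega

theorem exists_eval_ne_zero_of_eval_vCoeff_ne_zero {n m p : ℕ} [Fact p.Prime]
    {F : MvPolynomial (Fin n ⊕ Fin m) (ZMod p)} (hF : ∀ i, degreeOf (Sum.inl i) F < p)
    {d : Fin n →₀ ℕ} {βe : Fin m → ZMod p} (h : eval βe (vCoeff F d) ≠ 0) :
    ∃ βv : Fin n → ZMod p, eval (Sum.elim βv βe) F ≠ 0 := by
  set H := map (eval βe) (sumAlgEquiv (ZMod p) (Fin n) (Fin m) F)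
  have hHd : coeff d H = eval βe (vCoeff F d) := coeff_map _ _ _
  have hH : H ≠ 0 := fun h0 => h (by rw [← hHd, h0, coeff_zero])
  have hdeg : ∀ i, degreeOf i H < #(Finset.univ : Finset (ZMod p)) := fun i => by
    rw [Finset.card_univ, ZMod.card]
    exact ((degreeOf_map_le _ _ _).trans (degreeOf_sumAlgEquiv_le _ _)).trans_lt (hF i)
  obtain ⟨βv, -, hβv⟩ := exists_eval_ne_zero_of_degreeOf_lt_card hH _ hdeg
  exact ⟨βv, by rwa [eval_map_eval_sumAlgEquiv] at hβv⟩

theorem statement10_general (n m Δ p : ℕ) [Fact p.Prime]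
    (hm : 1 ≤ m) (hp : m ^ 2 * (2 * Δ + 2) ≤ p)
    (ed : Fin m → Sym2 (Fin n))
    (hΔ : ∀ i, (incidentE ed i).card ≤ Δ)
    (d : Fin n →₀ ℕ) (CP : MvPolynomial (Fin m) (ZMod p))
    (hCP : CP = vCoeff (fermatReduce p (Ppoly n m Δ p ed)) d) (hCP0 : CP ≠ 0) :
    ∃ α : ZMod p,
      α ∉ ((Finset.range (Δ + 2)).image fun l : ℕ => (l : ZMod p)) ∧
      ∃ βe : Fin m → ZMod p,
        (∀ j, βe j ∈ colorSet Δ p α) ∧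
        eval βe CP ≠ 0 ∧
        ∃ βv : Fin n → ZMod p,
          (∀ i, βv i ∈ (Finset.Icc 1 (Δ + 1)).image fun l : ℕ => (l : ZMod p)) ∧
          eval (Sum.elim βv βe) (Ppoly n m Δ p ed) ≠ 0 := by
  subst hCP
  have hΔ1 : 1 ≤ Δ := one_le_of_card_incidentE_le ed ⟨0, hm⟩ hΔ
  have hΔp : Δ + 2 < p := by
    have := Nat.le_mul_of_pos_left (2 * Δ + 2) (pow_pos hm 2)
    omega
  obtain ⟨βe, hβe_mem, hβe⟩ := exists_eval_ne_zero_of_degreeOf_lt_card hCP0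
    (fun _ => colorSet Δ p ((Δ + 2 : ℕ) : ZMod p)) fun k => by
      rw [card_colorSet hΔp]
      exact (degreeOf_vCoeff_fermatReduce_Ppoly_le_two ed Δ p d k).trans_lt (by omega)
  obtain ⟨βv, hβv⟩ := exists_eval_ne_zero_of_eval_vCoeff_ne_zero
    (fun i => degreeOf_fermatReduce_lt (Fact.out : p.Prime).one_lt _ (Sum.inl i)) hβe
  rw [eval_fermatReduce] at hβv
  refine ⟨_, ?_, βe, hβe_mem, hβe, βv, mem_image_Icc_of_eval_Ppoly_ne_zero ed Δ p hΔp.le hβv, hβv⟩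
  rw [ZMod.natCast_mem_image_natCast_iff (fun x hx => (Finset.mem_range.mp hx).trans hΔp) hΔp]
  exact Finset.notMem_range_self

/-- Theorem 3.14 of the paper. There exist `α ∈ Z_p ∖ {0, 1, …, Δ+1}`, a
tuple `β_e` of edge values in `{1, …, Δ+1, α}` with `C^{P'}(β_e) ≠ 0`, and a tuple `β_v` of
vertex values in `{1, …, Δ+1}`, such that `P(β_v, β_e) ≠ 0` in `Z_p`. -/
theorem statement10 (n m Δ p : ℕ) [Fact p.Prime]
    (hm : 1 ≤ m) (hp : m ^ 2 * (2 * Δ + 2) ≤ p)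
    (ed : Fin m → Sym2 (Fin n)) (hinj : Function.Injective ed)
    (hsimple : ∀ k, ¬ (ed k).IsDiag)
    (hΔ : ∀ i, (incidentE ed i).card ≤ Δ)
    (hΔmax : ∃ i, (incidentE ed i).card = Δ)
    (d : Fin n →₀ ℕ) (CP : MvPolynomial (Fin m) (ZMod p))
    (hCP : CP = vCoeff (fermatReduce p (Ppoly n m Δ p ed)) d) (hCP0 : CP ≠ 0) :
    ∃ α : ZMod p,
      α ∉ ((Finset.range (Δ + 2)).image fun l : ℕ => (l : ZMod p)) ∧
      ∃ βe : Fin m → ZMod p,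
        (∀ j, βe j ∈ colorSet Δ p α) ∧
        eval βe CP ≠ 0 ∧
        ∃ βv : Fin n → ZMod p,
          (∀ i, βv i ∈ (Finset.Icc 1 (Δ + 1)).image fun l : ℕ => (l : ZMod p)) ∧
          eval (Sum.elim βv βe) (Ppoly n m Δ p ed) ≠ 0 :=
  statement10_general n m Δ p hm hp ed hΔ d CP hCP hCP0

end
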